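/- For every positive integer n, ∑_{k=0}^{n-1} (4k+3)·g_k = 3n²·∑_{k=0}^{n-1} (n−1 choose k)²·C_k, where C_k is the k-th Catalan number. -/

import Mathlib

/-- `g n = ∑_{k=0}^n (n choose k)² (2k choose k)`. -/
def g (n : ℕ) : ℤ :=
  ∑ k ∈ Finset.range (n + 1), (n.choose k : ℤ) ^ 2 * ((2 * k).choose k : ℤ)

/-!
Induction on `n`: the step is the identity
`3(n+1)² ∑ₖ C(n,k)² Cₖ - 3n² ∑ₖ C(n-1,k)² Cₖ = (4n+3) gₙ`.
Writing `n C(n-1,k) = (n-k) C(n,k)` and `(k+1) Cₖ = C(2k,k)`, the difference of its two sides is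
`∑ₖ F(n,k)` with `F(n,k) = (2n-3k) C(n,k)² C(2k,k)`. This sum vanishes: with
`G(n,k) = k C(n,k-1)² C(2k,k)`, `(F, G)` is a WZ pair, `F(n+1,k) - F(n,k) = G(n,k+1) - G(n,k)`,
so `∑ₖ F(n,k)` does not depend on `n`, and it is `0` at `n = 0`.
-/

open Finset

namespace Nat

theorem cast_succ_mul_choose_succ (n k : ℕ) :
    ((k : ℤ) + 1) * (n.choose (k + 1) : ℤ) = ((n : ℤ) - k) * (n.choose k : ℤ) := by
  rcases le_or_gt k n with hkn | hnk
  · have h := congrArg (Nat.cast : ℕ → ℤ) (choose_succ_right_eq n k)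
    push_cast [Nat.cast_sub hkn] at h
    linarith
  · simp [choose_eq_zero_of_lt hnk, choose_eq_zero_of_lt (by omega : n < k + 1)]

theorem cast_mul_choose_sub_one (n k : ℕ) :
    (n : ℤ) * ((n - 1).choose k : ℤ) = ((n : ℤ) - k) * (n.choose k : ℤ) := by
  cases n with
  | zero => rcases k with _ | k <;> simp
  | succ n =>
    have h := congrArg (Nat.cast : ℕ → ℤ) (add_one_mul_choose_eq n k)
    push_cast at h ⊢
    rw [h, mul_comm, cast_succ_mul_choose_succ, cast_succ]

theorem cast_succ_mul_centralBinom_succ (k : ℕ) :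
    ((k : ℤ) + 1) * ((k + 1).centralBinom : ℤ) = 2 * (2 * (k : ℤ) + 1) * (k.centralBinom : ℤ) := by
  exact_mod_cast succ_mul_centralBinom_succ k

theorem cast_succ_mul_catalan (k : ℕ) : ((k : ℤ) + 1) * (catalan k : ℤ) = (k.centralBinom : ℤ) := by
  exact_mod_cast succ_mul_catalan_eq_centralBinom k

end Nat

def wzSummand (n k : ℕ) : ℤ := (2 * (n : ℤ) - 3 * k) * (n.choose k : ℤ) ^ 2 * (k.centralBinom : ℤ)

def wzCertificate (n k : ℕ) : ℤ := (k : ℤ) * (n.choose (k - 1) : ℤ) ^ 2 * (k.centralBinom : ℤ)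

theorem wzSummand_succ_sub (n k : ℕ) :
    wzSummand (n + 1) k - wzSummand n k = wzCertificate n (k + 1) - wzCertificate n k := by
  unfold wzSummand wzCertificate
  cases k with
  | zero => simp [Nat.centralBinom]; ring
  | succ k =>
    have hpascal : ((n + 1).choose (k + 1) : ℤ) = (n.choose k : ℤ) + (n.choose (k + 1) : ℤ) := by
      exact_mod_cast Nat.choose_succ_succ' n k
    have habs := Nat.cast_succ_mul_choose_succ n k
    have hcen := Nat.cast_succ_mul_centralBinom_succ (k + 1)
    rw [hpascal, add_tsub_cancel_right, add_tsub_cancel_right]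
    push_cast at hcen ⊢
    linear_combination (-(n.choose (k + 1) : ℤ) ^ 2) * hcen
      + 2 * ((k + 1).centralBinom : ℤ) * (-2 * (n.choose (k + 1) : ℤ) - n.choose k) * habs

theorem sum_range_wzSummand {n N : ℕ} (hnN : n < N) : ∑ k ∈ range N, wzSummand n k = 0 := by
  induction n with
  | zero => exact sum_eq_zero fun k _ ↦ by rcases k with _ | k <;> simp [wzSummand]
  | succ n ih =>
    have htelescope : ∑ k ∈ range N, (wzSummand (n + 1) k - wzSummand n k) = 0 := by
      simp only [wzSummand_succ_sub]
      rw [sum_range_sub (wzCertificate n), wzCertificate, wzCertificate,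
        Nat.choose_eq_zero_of_lt (by omega : n < N - 1)]
      simp
    rwa [sum_sub_distrib, ih (by omega), sub_zero] at htelescope

theorem sq_mul_sum_choose_sub_one_sq_catalan (m : ℕ) :
    (m : ℤ) ^ 2 * ∑ k ∈ range m, ((m - 1).choose k : ℤ) ^ 2 * (catalan k : ℤ)
      = ∑ k ∈ range (m + 1), (((m : ℤ) - k) * (m.choose k : ℤ)) ^ 2 * (catalan k : ℤ) := by
  rw [sum_range_succ, sub_self, zero_mul, zero_pow two_ne_zero, zero_mul, add_zero,
    mul_sum]
  refine sum_congr rfl fun k _ ↦ ?_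
  rw [← Nat.cast_mul_choose_sub_one]
  ring

theorem succ_sq_mul_choose_sq_catalan (m k : ℕ) :
    3 * ((m : ℤ) + 1) ^ 2 * ((m.choose k : ℤ) ^ 2 * (catalan k : ℤ))
      = 3 * ((((m : ℤ) - k) * (m.choose k : ℤ)) ^ 2 * (catalan k : ℤ))
        + (4 * (m : ℤ) + 3) * ((m.choose k : ℤ) ^ 2 * ((2 * k).choose k : ℤ))
        + wzSummand m k := by
  have hcat := Nat.cast_succ_mul_catalan k
  rw [Nat.centralBinom_eq_two_mul_choose] at hcat
  rw [wzSummand, Nat.centralBinom_eq_two_mul_choose, ← hcat]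
  ring

theorem sum_g_catalan_general (n : ℕ) :
    ∑ k ∈ Finset.range n, (4 * (k : ℤ) + 3) * g k
      = 3 * (n : ℤ) ^ 2 * ∑ k ∈ Finset.range n, ((n - 1).choose k : ℤ) ^ 2 * (catalan k : ℤ) := by
  induction n with
  | zero => simp
  | succ m ih =>
    rw [sum_range_succ, ih, add_tsub_cancel_right, mul_assoc, sq_mul_sum_choose_sub_one_sq_catalan,
      g, ← add_zero (_ + _), ← sum_range_wzSummand (lt_add_one m)]
    push_cast
    simp only [mul_sum, ← sum_add_distrib, succ_sq_mul_choose_sq_catalan]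

theorem sum_g_catalan (n : ℕ) (hn : 0 < n) :
    ∑ k ∈ Finset.range n, (4 * (k : ℤ) + 3) * g k
      = 3 * (n : ℤ) ^ 2 * ∑ k ∈ Finset.range n, ((n - 1).choose k : ℤ) ^ 2 * (catalan k : ℤ) :=
  sum_g_catalan_general n
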